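/- For variables $z_1,\dots,z_n$ and parameter $t$, the Hall–Littlewood identity for the empty partition holds: $\sum_{\sigma\in\mathfrak{S}_n}\sigma\left(\prod_{1\le i<j\le n}\frac{z_i-tz_j}{z_i-z_j}\right) = [n]_t!$, where $[n]_t! = \prod_{k=1}^n\frac{1-t^k}{1-t}$. -/

import Mathlib

/-!
Sorting the permutations of `Fin (n + 1)` by the value `p` they take at `0`, every term factors
as `∏_{m ≠ p} (z_p - t z_m)/(z_p - z_m)` times a term of the same sum for the `n` remaining
variables, so by induction it suffices to know that
`(1 - t) ∑_p ∏_{m ≠ p} (z_p - t z_m)/(z_p - z_m) = 1 - t ^ (n + 1)`.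
When no `z_m` vanishes this is Lagrange interpolation of `∏ (X - t z_m) - ∏ (X - z_m)`, a
polynomial of degree `≤ n`, evaluated at `0`; a node `z_{m₀} = 0` contributes exactly `t ^ n` and
leaves the same identity for the other nodes.
-/

open Finset Polynomial Lagrange

section KeyIdentity

variable {ι K : Type*} [Field K]

theorem degree_nodal_sub_nodal_lt (s : Finset ι) (v w : ι → K) :
    (nodal s v - nodal s w).degree < #s := by
  rcases eq_or_ne (nodal s v) (nodal s w) with h | h
  · simp [h]
  · rw [← degree_nodal (s := s) (v := v)]
    exact degree_sub_lt_left (by rw [degree_nodal, degree_nodal]) nodal_ne_zero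
      (by rw [nodal_monic.leadingCoeff, nodal_monic.leadingCoeff])

variable [DecidableEq ι]

theorem one_sub_mul_sum_prod_erase_of_ne_zero (t : K) {s : Finset ι} {z : ι → K}
    (hz : Set.InjOn z s) (hz0 : ∀ i ∈ s, z i ≠ 0) :
    (1 - t) * ∑ k ∈ s, ∏ m ∈ s.erase k, (z k - t * z m) / (z k - z m) = 1 - t ^ #s := by
  set P := nodal s (fun m => t * z m) - nodal s z
  have hP : eval 0 P =
      eval 0 (nodal s z) * ∑ k ∈ s, nodalWeight s z k * (0 - z k)⁻¹ * P.eval (z k) := by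
    rw [← eval_interpolate_not_at_node _ fun i hi h => hz0 i hi h.symm,
      ← eq_interpolate hz (degree_nodal_sub_nodal_lt s _ z)]
  have hP0 : eval 0 P = (t ^ #s - 1) * eval 0 (nodal s z) := by
    simp only [P, eval_sub, eval_nodal, zero_sub, neg_mul_eq_mul_neg, prod_mul_distrib,
      prod_const]
    ring
  have hnode : ∀ k ∈ s, nodalWeight s z k * (0 - z k)⁻¹ * P.eval (z k) =
      -(1 - t) * ∏ m ∈ s.erase k, (z k - t * z m) / (z k - z m) := by
    intro k hk
    simp only [P, eval_sub, eval_nodal, ← mul_prod_erase s _ hk, sub_self, zero_mul, sub_zero,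
      nodalWeight, prod_div_distrib, prod_inv_distrib]
    field_simp [hz0 k hk]
    ring
  have hne : eval 0 (nodal s z) ≠ 0 := by
    rw [eval_nodal, prod_ne_zero_iff]
    exact fun i hi => by simpa using hz0 i hi
  rw [hP0, sum_congr rfl hnode, ← mul_sum] at hP
  have := mul_left_cancel₀ hne ((mul_comm _ _).trans hP)
  linear_combination this

theorem one_sub_mul_sum_prod_erase (t : K) {s : Finset ι} {z : ι → K} (hz : Set.InjOn z s) :
    (1 - t) * ∑ k ∈ s, ∏ m ∈ s.erase k, (z k - t * z m) / (z k - z m) = 1 - t ^ #s := by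
  by_cases h0 : ∃ k₀ ∈ s, z k₀ = 0
  swap
  · push Not at h0
    exact one_sub_mul_sum_prod_erase_of_ne_zero t hz h0
  obtain ⟨k₀, hk₀, hzk₀⟩ := h0
  have hne : ∀ m ∈ s.erase k₀, z m ≠ 0 := fun m hm h =>
    (mem_erase.1 hm).1 (hz (mem_erase.1 hm).2 hk₀ (h.trans hzk₀.symm))
  have hzero_term : ∏ m ∈ s.erase k₀, (z k₀ - t * z m) / (z k₀ - z m) = t ^ #(s.erase k₀) := by
    rw [← prod_const]
    refine prod_congr rfl fun m hm => ?_
    rw [hzk₀, zero_sub, zero_sub, neg_div_neg_eq, mul_div_cancel_right₀ _ (hne m hm)]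
  have hother_terms : ∀ k ∈ s.erase k₀, ∏ m ∈ s.erase k, (z k - t * z m) / (z k - z m) =
      ∏ m ∈ (s.erase k₀).erase k, (z k - t * z m) / (z k - z m) := by
    intro k hk
    rw [erase_right_comm, ← mul_prod_erase _ _ (mem_erase.2 ⟨(ne_of_mem_erase hk).symm, hk₀⟩),
      hzk₀, mul_zero, sub_zero, div_self (hne k hk), one_mul]
  rw [← add_sum_erase s _ hk₀, hzero_term, sum_congr rfl hother_terms, mul_add,
    one_sub_mul_sum_prod_erase_of_ne_zero t (hz.mono (erase_subset k₀ s)) hne,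
    ← card_erase_add_one hk₀]
  ring

end KeyIdentity

theorem prod_filter_lt_eq_prod_prod_Ioi {α M : Type*} [Fintype α] [LinearOrder α]
    [LocallyFiniteOrderTop α] [CommMonoid M] (f : α × α → M) :
    ∏ p ∈ univ.filter (fun p : α × α => p.1 < p.2), f p = ∏ i, ∏ j ∈ Ioi i, f (i, j) := by
  rw [← univ_product_univ, prod_filter, prod_product]
  refine prod_congr rfl fun i _ => ?_
  rw [← filter_lt_eq_Ioi, prod_filter]

theorem Fin.prod_swap_zero_succ {M : Type*} [CommMonoid M] {n : ℕ} (p : Fin (n + 1))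
    (g : Fin (n + 1) → M) :
    ∏ j : Fin n, g (Equiv.swap 0 p j.succ) = ∏ m ∈ univ.erase p, g m :=
  (Fin.prod_Ioi_zero _).symm.trans <| prod_equiv (Equiv.swap 0 p)
    (fun i => by simp [Equiv.swap_apply_eq_iff]) fun _ _ => rfl

section HallLittlewood

variable {K : Type*} [Field K]

def hallLittlewoodProd {n : ℕ} (t : K) (z : Fin n → K) : K :=
  ∏ p ∈ univ.filter (fun p : Fin n × Fin n => p.1 < p.2), (z p.1 - t * z p.2) / (z p.1 - z p.2)

theorem hallLittlewoodProd_succ {n : ℕ} (t : K) (z : Fin (n + 1) → K) :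
    hallLittlewoodProd t z = (∏ j : Fin n, (z 0 - t * z j.succ) / (z 0 - z j.succ)) *
      hallLittlewoodProd t (fun j => z j.succ) := by
  simp only [hallLittlewoodProd, prod_filter_lt_eq_prod_prod_Ioi, Fin.prod_univ_succ,
    Fin.prod_Ioi_zero, Fin.prod_Ioi_succ]

theorem hallLittlewoodProd_comp_decomposeFin_symm {n : ℕ} (t : K) (z : Fin (n + 1) → K)
    (p : Fin (n + 1)) (e : Equiv.Perm (Fin n)) :
    hallLittlewoodProd t (z ∘ Equiv.Perm.decomposeFin.symm (p, e)) =
      (∏ m ∈ univ.erase p, (z p - t * z m) / (z p - z m)) *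
        hallLittlewoodProd t ((fun j => z (Equiv.swap 0 p j.succ)) ∘ e) := by
  rw [hallLittlewoodProd_succ, ← Fin.prod_swap_zero_succ p,
    ← Equiv.prod_comp e (fun j => (z p - t * z (Equiv.swap 0 p j.succ)) /
      (z p - z (Equiv.swap 0 p j.succ)))]
  simp only [Function.comp_def, Equiv.Perm.decomposeFin_symm_apply_zero,
    Equiv.Perm.decomposeFin_symm_apply_succ]

theorem sum_perm_hallLittlewoodProd {t : K} (ht : t ≠ 1) {n : ℕ} {z : Fin n → K}
    (hz : Function.Injective z) :
    ∑ σ : Equiv.Perm (Fin n), hallLittlewoodProd t (z ∘ σ) =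
      ∏ k ∈ range n, (1 - t ^ (k + 1)) / (1 - t) := by
  induction n with
  | zero => simp [hallLittlewoodProd]
  | succ n ih =>
    have hkey := one_sub_mul_sum_prod_erase t (s := univ) hz.injOn
    rw [card_univ, Fintype.card_fin, mul_comm] at hkey
    have hz' (p : Fin (n + 1)) : Function.Injective fun j : Fin n => z (Equiv.swap 0 p j.succ) :=
      hz.comp <| (Equiv.swap 0 p).injective.comp <| Fin.succ_injective n
    simp_rw [← Equiv.sum_comp Equiv.Perm.decomposeFin.symm, Fintype.sum_prod_type,
      hallLittlewoodProd_comp_decomposeFin_symm, ← mul_sum, ih (hz' _), ← sum_mul,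
      eq_div_of_mul_eq (sub_ne_zero.2 ht.symm) hkey, prod_range_succ]
    exact mul_comm _ _

end HallLittlewood

/-- Hall–Littlewood identity for the empty partition:
  ∑_{σ ∈ S_n} σ(∏_{i<j} (z_i - t z_j)/(z_i - z_j)) = [n]_t!
  where [n]_t! = ∏_{k=1}^n (1-t^k)/(1-t). -/
theorem hall_littlewood_empty {K : Type*} [Field K] (n : ℕ) (t : K) (ht : t ≠ 1)
    (z : Fin n → K) (hz : Function.Injective z) :
    ∑ σ : Equiv.Perm (Fin n),
      ∏ p ∈ Finset.univ.filter (fun p : Fin n × Fin n => p.1 < p.2),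
        (z (σ p.1) - t * z (σ p.2)) / (z (σ p.1) - z (σ p.2))
    = ∏ k ∈ Finset.range n, (1 - t ^ (k + 1)) / (1 - t) :=
  sum_perm_hallLittlewoodProd ht hz
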